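/- arXiv:2507.20167 — 3 statements merged into one kernel-verified Lean document; each statement's English description precedes it below -/
import Mathlib

section
/- For every integer n ≥ 1 and all real x: β_{n,λ}(x) = (n/2)·E_{n−1,λ}(x) + Σ_{k=0}^{n} C(n,k)·β_{k,λ}·E_{n−k,λ}(x). -/
/-! Writing `e = e_λ(t)`, the defining identities say that `Σ β_{n,λ}(x) tⁿ/n! = t e_λ^x(t)/(e - 1)`,
`Σ β_{n,λ} tⁿ/n! = t/(e - 1)` (as `e_λ^0 = 1`) and `Σ E_{n,λ}(x) tⁿ/n! = 2 e_λ^x(t)/(e + 1)`. Since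
`1/(e - 1) = 1/(e + 1) + 2/((e - 1)(e + 1))`, this gives
`2 Σ β_{n,λ}(x) tⁿ/n! = t Σ E_{n,λ}(x) tⁿ/n! + 2 (Σ β_{n,λ} tⁿ/n!)(Σ E_{n,λ}(x) tⁿ/n!)`,
and comparing coefficients of `tⁿ` is the claim. -/

open Finset PowerSeries

noncomputable def dff (lam x : ℝ) (n : ℕ) : ℝ := ∏ i ∈ Finset.range n, (x - i * lam)

noncomputable def degExp (lam x : ℝ) : PowerSeries ℝ :=
  PowerSeries.mk fun k => dff lam x k / k.factorial

open Nat

section Egf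

variable {K : Type*} [Field K]

def egf (a : ℕ → K) : K⟦X⟧ := mk fun n => a n / n !

@[simp]
theorem coeff_egf (a : ℕ → K) (n : ℕ) : coeff n (egf a) = a n / n ! := coeff_mk _ _

theorem egf_mul_egf [CharZero K] (a b : ℕ → K) :
    egf a * egf b = egf fun n => ∑ k ∈ range (n + 1), n.choose k * a k * b (n - k) := by
  ext n
  rw [coeff_mul, Nat.sum_antidiagonal_eq_sum_range_succ_mk, coeff_egf, sum_div]
  refine sum_congr rfl fun k hk => ?_
  rw [Nat.cast_choose K (Nat.lt_succ_iff.mp (mem_range.mp hk))]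
  simp only [coeff_egf]
  have : (n ! : K) ≠ 0 := Nat.cast_ne_zero.mpr n.factorial_ne_zero
  field_simp

theorem X_mul_egf [CharZero K] (a : ℕ → K) : X * egf a = egf fun n => n * a (n - 1) := by
  ext (_ | n)
  · simp
  · rw [coeff_succ_X_mul, coeff_egf, coeff_egf, Nat.add_sub_cancel, factorial_succ]
    push_cast
    field_simp

theorem eq_add_sum_choose_of_two_mul_egf_eq [CharZero K] {b b₀ f : ℕ → K}
    (h : 2 * egf b = X * egf f + 2 * (egf b₀ * egf f)) (n : ℕ) :
    b n = n / 2 * f (n - 1) + ∑ k ∈ range (n + 1), n.choose k * b₀ k * f (n - k) := by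
  rw [X_mul_egf, egf_mul_egf, ← map_ofNat (C (R := K)) 2] at h
  have hn := congrArg (coeff n) h
  simp only [map_add, coeff_C_mul, coeff_egf] at hn
  have : (n ! : K) ≠ 0 := Nat.cast_ne_zero.mpr n.factorial_ne_zero
  field_simp at hn
  linear_combination hn / 2

end Egf

theorem degExp_zero (lam : ℝ) : degExp lam 0 = 1 := by
  ext (_ | k)
  · simp [degExp, dff]
  · simp [degExp, dff, coeff_one, prod_range_succ']

theorem constantCoeff_degExp (lam x : ℝ) : constantCoeff (degExp lam x) = 1 := by
  simp [degExp, dff, ← coeff_zero_eq_constantCoeff_apply]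

theorem coeff_one_degExp (lam x : ℝ) : coeff 1 (degExp lam x) = x := by
  simp [degExp, dff]

theorem degExp_sub_one_ne_zero (lam : ℝ) {x : ℝ} (hx : x ≠ 0) : degExp lam x - 1 ≠ 0 := by
  intro h
  simpa [coeff_one_degExp, coeff_one, hx] using congrArg (coeff 1) h

theorem degExp_add_one_ne_zero (lam x : ℝ) : degExp lam x + 1 ≠ 0 := by
  intro h
  have := congrArg constantCoeff h
  rw [map_add, constantCoeff_degExp] at this
  norm_num at this

theorem two_mul_eq_of_mul_sub_one_of_mul_add_one {R : Type*} [CommRing R] [IsDomain R]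
    {e t g b b₀ f : R} (he₁ : e - 1 ≠ 0) (he₂ : e + 1 ≠ 0)
    (hb : b * (e - 1) = t * g) (hb₀ : b₀ * (e - 1) = t) (hf : f * (e + 1) = 2 * g) :
    2 * b = t * f + 2 * (b₀ * f) := by
  refine mul_right_cancel₀ (mul_ne_zero he₁ he₂) ?_
  linear_combination (2 * (e + 1)) * hb - (t * (e + 1)) * hf - (2 * f * (e + 1)) * hb₀

theorem stmt3_general (lam : ℝ)
    (B E : ℝ → ℕ → ℝ)
    (hB : ∀ x, (PowerSeries.mk fun n => B x n / n.factorial) * (degExp lam 1 - 1)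
        = (PowerSeries.X : PowerSeries ℝ) * degExp lam x)
    (hE : ∀ x, (PowerSeries.mk fun n => E x n / n.factorial) * (degExp lam 1 + 1)
        = 2 * degExp lam x)
    (n : ℕ) (x : ℝ) :
    B x n = (n : ℝ) / 2 * E x (n - 1)
      + ∑ k ∈ Finset.range (n + 1), (n.choose k : ℝ) * B 0 k * E x (n - k) := by
  have hB₀ := hB 0
  rw [degExp_zero, mul_one] at hB₀
  exact eq_add_sum_choose_of_two_mul_egf_eq (two_mul_eq_of_mul_sub_one_of_mul_add_one
    (degExp_sub_one_ne_zero lam one_ne_zero) (degExp_add_one_ne_zero lam 1) (hB x) hB₀ (hE x)) n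

theorem stmt3 (lam : ℝ) (hlam : lam ≠ 0)
    (B E : ℝ → ℕ → ℝ)
    (hB : ∀ x, (PowerSeries.mk fun n => B x n / n.factorial) * (degExp lam 1 - 1)
        = (PowerSeries.X : PowerSeries ℝ) * degExp lam x)
    (hE : ∀ x, (PowerSeries.mk fun n => E x n / n.factorial) * (degExp lam 1 + 1)
        = 2 * degExp lam x)
    (n : ℕ) (hn : 1 ≤ n) (x : ℝ) :
    B x n = (n : ℝ) / 2 * E x (n - 1)
      + ∑ k ∈ Finset.range (n + 1), (n.choose k : ℝ) * B 0 k * E x (n - k) :=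
  stmt3_general lam B E hB hE n x
end

section
/- Let Y be a real random variable on a probability space such that (Y)_{n,λ} is integrable for every n ≥ 0. Then for every integer n ≥ 0 and every real x, the random variable S^Y_{n,λ}(x+Y) is integrable and E[S^Y_{n,λ}(x+Y)] = (x)_{n,λ}. -/
/-!
Let `M` be the exponential generating function of the degenerate moments of `Y`. The defining
identity says that the generating function of `S x ·` is `e_λ^x(t) M⁻¹`. The degenerate
Vandermonde identity `e_λ^{x+y} = e_λ^x e_λ^y` turns the generating function of `S (x + Y) ·`
into `e_λ^Y(t) · e_λ^x(t) M⁻¹`; taking expectations coefficientwise replaces `e_λ^Y` by `M`,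
which leaves `e_λ^x(t)`.
-/

open Finset PowerSeries

open MeasureTheory

theorem dff_zero (lam x : ℝ) : dff lam x 0 = 1 := prod_range_zero _

theorem dff_succ (lam x : ℝ) (n : ℕ) : dff lam x (n + 1) = dff lam x n * (x - n * lam) :=
  prod_range_succ _ _

theorem dff_add (lam x y : ℝ) (n : ℕ) :
    dff lam (x + y) n =
      ∑ p ∈ antidiagonal n, (n.choose p.1 : ℝ) * (dff lam x p.1 * dff lam y p.2) := by
  induction n with
  | zero => simp [dff_zero]
  | succ n ih =>
    rw [Finset.sum_antidiagonal_choose_succ_mul (fun i j => dff lam x i * dff lam y j),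
      dff_succ, ih, sum_mul, ← sum_add_distrib]
    refine sum_congr rfl fun p hp => ?_
    obtain rfl : p.1 + p.2 = n := mem_antidiagonal.mp hp
    rw [Nat.choose_symm_add, dff_succ, dff_succ]
    push_cast
    ring

theorem degExp_add (lam x y : ℝ) : degExp lam (x + y) = degExp lam x * degExp lam y := by
  ext n
  rw [coeff_mul, degExp, coeff_mk, dff_add, sum_div]
  refine sum_congr rfl fun p hp => ?_
  obtain rfl : p.1 + p.2 = n := mem_antidiagonal.mp hp
  simp only [degExp, coeff_mk]
  have hchoose : ((p.1 + p.2).choose p.2 : ℝ) ≠ 0 :=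
    Nat.cast_ne_zero.mpr (Nat.choose_pos (Nat.le_add_left _ _)).ne'
  rw [Nat.choose_symm_add, ← Nat.add_choose_mul_factorial_mul_factorial]
  push_cast
  field_simp

section CoeffIntegral

variable {Ω : Type*} [MeasurableSpace Ω] (μ : Measure Ω)

noncomputable def coeffIntegral (F : Ω → ℝ⟦X⟧) : ℝ⟦X⟧ := mk fun n => ∫ ω, coeff n (F ω) ∂μ

variable {μ} {F : Ω → ℝ⟦X⟧}

theorem integrable_coeff_mul_const (hF : ∀ n, Integrable (fun ω => coeff n (F ω)) μ)
    (C : ℝ⟦X⟧) (n : ℕ) : Integrable (fun ω => coeff n (F ω * C)) μ := by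
  simp only [coeff_mul]
  exact integrable_finsetSum _ fun p _ => (hF p.1).mul_const _

theorem integral_coeff_mul_const (hF : ∀ n, Integrable (fun ω => coeff n (F ω)) μ)
    (C : ℝ⟦X⟧) (n : ℕ) : ∫ ω, coeff n (F ω * C) ∂μ = coeff n (coeffIntegral μ F * C) := by
  simp only [coeffIntegral, coeff_mk, coeff_mul]
  rw [integral_finsetSum _ fun p _ => (hF p.1).mul_const _]
  exact sum_congr rfl fun p _ => integral_mul_const _ _

end CoeffIntegral

theorem stmt9_general (lam : ℝ)
    {Ω : Type*} [MeasurableSpace Ω] (μ : Measure Ω) [IsProbabilityMeasure μ]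
    (Y : Ω → ℝ)
    (hY : ∀ n : ℕ, Integrable (fun ω => dff lam (Y ω) n) μ)
    (S : ℝ → ℕ → ℝ)
    (hS : ∀ x, (PowerSeries.mk fun n => S x n / n.factorial) *
        (PowerSeries.mk fun n => (∫ ω, dff lam (Y ω) n ∂μ) / n.factorial) = degExp lam x)
    (n : ℕ) (x : ℝ) :
    Integrable (fun ω => S (x + Y ω) n) μ
    ∧ (∫ ω, S (x + Y ω) n ∂μ) = dff lam x n := by
  set M := PowerSeries.mk fun n => (∫ ω, dff lam (Y ω) n ∂μ) / n.factorial
  have hdegExp : ∀ k, Integrable (fun ω => coeff k (degExp lam (Y ω))) μ := fun k => by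
    simpa only [degExp, coeff_mk] using (hY k).div_const _
  have hM : coeffIntegral μ (fun ω => degExp lam (Y ω)) = M := by
    ext k
    simp only [coeffIntegral, degExp, coeff_mk, M, integral_div]
  have hM0 : constantCoeff M ≠ 0 := by
    simp [M, ← coeff_zero_eq_constantCoeff_apply, dff_zero]
  have hSY : (fun ω => S (x + Y ω) n) =
      fun ω => n.factorial * coeff n (degExp lam (Y ω) * (degExp lam x * M⁻¹)) := by
    funext ω
    rw [← mul_assoc, mul_comm _ (degExp lam x), ← degExp_add,
      ← (eq_mul_inv_iff_mul_eq hM0).mpr (hS _), coeff_mk]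
    field_simp
  refine ⟨hSY ▸ (integrable_coeff_mul_const hdegExp _ n).const_mul _, ?_⟩
  rw [hSY, integral_const_mul, integral_coeff_mul_const hdegExp, hM, mul_left_comm,
    PowerSeries.mul_inv_cancel _ hM0, mul_one, degExp, coeff_mk]
  field_simp

theorem stmt9 (lam : ℝ) (hlam : lam ≠ 0)
    {Ω : Type*} [MeasurableSpace Ω] (μ : Measure Ω) [IsProbabilityMeasure μ]
    (Y : Ω → ℝ) (hYm : Measurable Y)
    (hY : ∀ n : ℕ, Integrable (fun ω => dff lam (Y ω) n) μ)
    (S : ℝ → ℕ → ℝ)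
    (hS : ∀ x, (PowerSeries.mk fun n => S x n / n.factorial) *
        (PowerSeries.mk fun n => (∫ ω, dff lam (Y ω) n ∂μ) / n.factorial) = degExp lam x)
    (n : ℕ) (x : ℝ) :
    Integrable (fun ω => S (x + Y ω) n) μ
    ∧ (∫ ω, S (x + Y ω) n ∂μ) = dff lam x n :=
  stmt9_general lam μ Y hY S hS n x
end

section
/- For all integers a ≥ 1, b ≥ 1, every integer n ≥ 1 and every real x: T^{(a,b)}_{n,λ}(x) = T^{(a,b−1)}_{n,λ}(x) − (n/2)·T^{(a−1,b)}_{n−1,λ}(x). -/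
open Finset PowerSeries

/-!
Write `E = e_λ(t)` and `F_{a,b}` for the generating function of `T^{(a,b)}`. Multiplying the
defining identities of `F_{a+1,b+1}`, `F_{a+1,b}` and `F_{a,b+1}` by `2`, `-2(E+1)` and
`t(E-1)` and adding, the right-hand sides cancel because `(E+1) - (E-1) = 2`; cancelling the
nonzero factor `(E-1)^{a+1}(E+1)^{b+1}` leaves `2 F_{a+1,b+1} = 2 F_{a+1,b} - t F_{a,b+1}`,
whose coefficient of `t^{n+1}` is the recurrence.
-/

theorem degExp_one_sub_one_ne_zero (lam : ℝ) : degExp lam 1 - 1 ≠ 0 := by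
  intro h
  simpa [degExp, dff] using congrArg (coeff 1) h

theorem degExp_one_add_one_ne_zero (lam : ℝ) : degExp lam 1 + 1 ≠ 0 := by
  intro h
  simpa [degExp, dff] using congrArg constantCoeff h

theorem two_mul_eq_two_mul_sub_mul_of_sheffer {R : Type*} [CommRing R] [IsDomain R]
    {E t G F₁ F₂ F₃ : R} (hEsub : E - 1 ≠ 0) (hEadd : E + 1 ≠ 0) {a b : ℕ}
    (hF₁ : F₁ * (E - 1) ^ (a + 1) * (E + 1) ^ (b + 1) = 2 ^ (b + 1) * t ^ (a + 1) * G)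
    (hF₂ : F₂ * (E - 1) ^ (a + 1) * (E + 1) ^ b = 2 ^ b * t ^ (a + 1) * G)
    (hF₃ : F₃ * (E - 1) ^ a * (E + 1) ^ (b + 1) = 2 ^ (b + 1) * t ^ a * G) :
    2 * F₁ = 2 * F₂ - t * F₃ := by
  refine mul_right_cancel₀ (mul_ne_zero (pow_ne_zero (a + 1) hEsub) (pow_ne_zero (b + 1) hEadd)) ?_
  linear_combination 2 * hF₁ - 2 * (E + 1) * hF₂ + t * (E - 1) * hF₃

theorem coeff_succ_eq_of_two_mul_mk_eq {K : Type*} [Field K] [CharZero K] {f g h : ℕ → K}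
    (H : 2 * PowerSeries.mk (fun n => f n / n.factorial) =
      2 * PowerSeries.mk (fun n => g n / n.factorial) - X * PowerSeries.mk (fun n => h n / n.factorial))
    (n : ℕ) : f (n + 1) = g (n + 1) - (n + 1) / 2 * h n := by
  have hn := congrArg (coeff (n + 1)) H
  simp only [map_sub, coeff_succ_X_mul, coeff_mk, two_mul, map_add,
    Nat.factorial_succ, Nat.cast_mul, Nat.cast_succ] at hn
  have hfac : (n.factorial : K) ≠ 0 := Nat.cast_ne_zero.mpr n.factorial_ne_zero
  field_simp at hn
  linear_combination hn / 2

theorem stmt17_general (lam : ℝ)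
    (T : ℕ → ℕ → ℝ → ℕ → ℝ)
    (hT : ∀ a b x, (PowerSeries.mk fun n => T a b x n / n.factorial)
          * (degExp lam 1 - 1) ^ a * (degExp lam 1 + 1) ^ b
        = (2 : PowerSeries ℝ) ^ b * (PowerSeries.X : PowerSeries ℝ) ^ a * degExp lam x)
    (a b : ℕ) (ha : 1 ≤ a) (hb : 1 ≤ b) (n : ℕ) (hn : 1 ≤ n) (x : ℝ) :
    T a b x n = T a (b - 1) x n - (n : ℝ) / 2 * T (a - 1) b x (n - 1) := by
  obtain ⟨a, rfl⟩ := Nat.exists_eq_add_of_le' ha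
  obtain ⟨b, rfl⟩ := Nat.exists_eq_add_of_le' hb
  obtain ⟨n, rfl⟩ := Nat.exists_eq_add_of_le' hn
  have hseries := two_mul_eq_two_mul_sub_mul_of_sheffer (degExp_one_sub_one_ne_zero lam)
    (degExp_one_add_one_ne_zero lam) (hT (a + 1) (b + 1) x) (hT (a + 1) b x) (hT a (b + 1) x)
  simpa using coeff_succ_eq_of_two_mul_mk_eq hseries n

theorem stmt17 (lam : ℝ) (hlam : lam ≠ 0)
    (T : ℕ → ℕ → ℝ → ℕ → ℝ)
    (hT : ∀ a b x, (PowerSeries.mk fun n => T a b x n / n.factorial)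
          * (degExp lam 1 - 1) ^ a * (degExp lam 1 + 1) ^ b
        = (2 : PowerSeries ℝ) ^ b * (PowerSeries.X : PowerSeries ℝ) ^ a * degExp lam x)
    (a b : ℕ) (ha : 1 ≤ a) (hb : 1 ≤ b) (n : ℕ) (hn : 1 ≤ n) (x : ℝ) :
    T a b x n = T a (b - 1) x n - (n : ℝ) / 2 * T (a - 1) b x (n - 1) :=
  stmt17_general lam T hT a b ha hb n hn x
end
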